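/- Let M be a compact metric space, f : M → M Borel measurable, and K₁, K₂ nonempty compact f-invariant subsets with nonempty intersection. Then the basins of statistical attraction satisfy B(K₁ ∩ K₂) = B(K₁) ∩ B(K₂). -/

import Mathlib

open MeasureTheory Filter Metric Set
open scoped Classical ENNReal Topology

/-- Frequency of visits, up to time `n - 1`, of the orbit of `x` to the
`ε`-neighborhood of `K`: `(1/n) · #{0 ≤ j ≤ n−1 : dist(f^j(x), K) < ε}`. -/
noncomputable def visitFreq {M : Type*} [MetricSpace M] (f : M → M) (K : Set M) (ε : ℝ)
    (x : M) (n : ℕ) : ℝ :=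
  (((Finset.range n).filter (fun j => infDist (f^[j] x) K < ε)).card : ℝ) / n

/-- Basin of statistical attraction of `K`. -/
def statBasin {M : Type*} [MetricSpace M] (f : M → M) (K : Set M) : Set M :=
  {x | ∀ ε > 0, Tendsto (fun n => visitFreq f K ε x n) atTop (𝓝 1)}

/-- The auxiliary basin `B_ε(K) = {x : liminf_n (1/n)·#{j < n : dist(f^j(x),K) < ε} > 1 − ε}`. -/
def statBasinEps {M : Type*} [MetricSpace M] (f : M → M) (K : Set M) (ε : ℝ) : Set M :=
  {x | 1 - ε < atTop.liminf (fun n => visitFreq f K ε x n)}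

/-! Statistical attraction to `K₁` and to `K₂` gives attraction to `K₁ ∩ K₂` because, by
compactness, a point `δ`-close to both sets is `ε`-close to their intersection; for such `δ`
the times `j < n` at which the orbit is `δ`-close to `K₁` and to `K₂` both have frequency
tending to `1`, so by inclusion–exclusion the times at which both happen do as well. -/

theorem IsCompact.exists_thickening_inter_thickening_subset {α : Type*} [PseudoEMetricSpace α]
    {s t : Set α} (hs : IsCompact s) (ht : IsClosed t) {ε : ℝ} (hε : 0 < ε) :
    ∃ δ > 0, thickening δ s ∩ thickening δ t ⊆ thickening ε (s ∩ t) := by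
  -- The compact part of `s` away from `s ∩ t` is disjoint from `t`, hence at positive distance.
  set U := thickening (ε / 2) (s ∩ t)
  have hdisj : Disjoint (s \ U) t := by
    refine disjoint_left.2 fun y hy hyt => hy.2 ?_
    exact self_subset_thickening (half_pos hε) _ ⟨hy.1, hyt⟩
  obtain ⟨δ, hδ, hδdisj⟩ := hdisj.exists_thickenings (hs.diff isOpen_thickening) ht
  refine ⟨min δ (ε / 2), lt_min hδ (half_pos hε), fun y ⟨hys, hyt⟩ => ?_⟩
  have hsU : s ⊆ U ∪ s \ U := fun z hz => by by_cases hzU : z ∈ U <;> simp [hz, hzU]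
  rcases thickening_union _ U (s \ U) ▸ thickening_subset_of_subset _ hsU hys with hyU | hyU
  · refine thickening_mono ?_ _ (thickening_thickening_subset _ _ _ hyU)
    linarith [min_le_right δ (ε / 2)]
  · exact (hδdisj.notMem_of_mem_left (thickening_mono (min_le_left _ _) _ hyU)
      (thickening_mono (min_le_left _ _) _ hyt)).elim

theorem Finset.card_filter_add_card_filter_le {ι : Type*} (s : Finset ι) {p q r : ι → Prop}
    [DecidablePred p] [DecidablePred q] [DecidablePred r] (h : ∀ i ∈ s, p i → q i → r i) :
    (s.filter p).card + (s.filter q).card ≤ (s.filter r).card + s.card := by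
  have hinter : s.filter p ∩ s.filter q ⊆ s.filter r := by
    intro i hi
    simp only [Finset.mem_inter, Finset.mem_filter] at hi ⊢
    exact ⟨hi.1.1, h i hi.1.1 hi.1.2 hi.2.2⟩
  have hunion : s.filter p ∪ s.filter q ⊆ s :=
    Finset.union_subset (Finset.filter_subset _ _) (Finset.filter_subset _ _)
  rw [← Finset.card_inter_add_card_union]
  exact add_le_add (Finset.card_le_card hinter) (Finset.card_le_card hunion)

section visitFreq

variable {M : Type*} [MetricSpace M] (f : M → M) (x : M)

theorem visitFreq_le_one (K : Set M) (ε : ℝ) (n : ℕ) : visitFreq f K ε x n ≤ 1 := by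
  rcases Nat.eq_zero_or_pos n with rfl | hn
  · simp [visitFreq]
  · rw [visitFreq, div_le_one (by exact_mod_cast hn)]
    exact_mod_cast (Finset.card_filter_le _ _).trans_eq (Finset.card_range n)

theorem visitFreq_mono {K K' : Set M} {ε ε' : ℝ}
    (h : ∀ y, infDist y K < ε → infDist y K' < ε') (n : ℕ) :
    visitFreq f K ε x n ≤ visitFreq f K' ε' x n := by
  refine div_le_div_of_nonneg_right ?_ n.cast_nonneg
  exact_mod_cast Finset.card_le_card (Finset.monotone_filter_right _ fun _ _ => h _)

theorem visitFreq_add_visitFreq_le {K₁ K₂ K : Set M} {δ ε : ℝ}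
    (h : ∀ y, infDist y K₁ < δ → infDist y K₂ < δ → infDist y K < ε) (n : ℕ) :
    visitFreq f K₁ δ x n + visitFreq f K₂ δ x n ≤ visitFreq f K ε x n + 1 := by
  rcases Nat.eq_zero_or_pos n with rfl | hn
  · simp [visitFreq]
  have hcard := Finset.card_filter_add_card_filter_le (Finset.range n)
    (fun j _ => h (f^[j] x))
  rw [Finset.card_range] at hcard
  have hn' : (0 : ℝ) < n := by exact_mod_cast hn
  unfold visitFreq
  rw [← add_div, div_add_one hn'.ne', div_le_div_iff_of_pos_right hn']
  exact_mod_cast hcard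

theorem tendsto_visitFreq_of_le {K : Set M} {ε : ℝ} {g : ℕ → ℝ}
    (hg : Tendsto g atTop (𝓝 1)) (hle : ∀ n, g n ≤ visitFreq f K ε x n) :
    Tendsto (visitFreq f K ε x) atTop (𝓝 1) :=
  tendsto_of_tendsto_of_tendsto_of_le_of_le hg tendsto_const_nhds hle (visitFreq_le_one f x K ε)

end visitFreq

theorem statBasin_mono {M : Type*} [MetricSpace M] (f : M → M) {K K' : Set M} (hK : K ⊆ K')
    (hne : K.Nonempty) : statBasin f K ⊆ statBasin f K' := fun x hx ε hε =>
  tendsto_visitFreq_of_le f x (hx ε hε)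
    (visitFreq_mono f x fun _ hy => (infDist_le_infDist_of_subset hK hne).trans_lt hy)

theorem statBasin_inter_general {M : Type*} [MetricSpace M] (f : M → M) (K₁ K₂ : Set M)
    (h₁c : IsCompact K₁) (h₂c : IsCompact K₂) (hne : (K₁ ∩ K₂).Nonempty) :
    statBasin f (K₁ ∩ K₂) = statBasin f K₁ ∩ statBasin f K₂ := by
  refine Subset.antisymm (subset_inter (statBasin_mono f inter_subset_left hne)
    (statBasin_mono f inter_subset_right hne)) ?_
  rintro x ⟨hx₁, hx₂⟩ ε hε
  obtain ⟨δ, hδ, hδsub⟩ := h₁c.exists_thickening_inter_thickening_subset h₂c.isClosed hε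
  have hclose : ∀ y, infDist y K₁ < δ → infDist y K₂ < δ → infDist y (K₁ ∩ K₂) < ε :=
    fun y h₁ h₂ => (mem_thickening_iff_infDist_lt hne).1 <| hδsub
      ⟨(mem_thickening_iff_infDist_lt hne.left).2 h₁,
        (mem_thickening_iff_infDist_lt hne.right).2 h₂⟩
  have hlim : Tendsto (fun n => visitFreq f K₁ δ x n + visitFreq f K₂ δ x n - 1)
      atTop (𝓝 1) := by
    simpa using ((hx₁ δ hδ).add (hx₂ δ hδ)).sub_const 1
  exact tendsto_visitFreq_of_le f x hlim fun n =>
    sub_le_iff_le_add.2 (visitFreq_add_visitFreq_le f x hclose n)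

/-- basins of statistical attraction satisfy
`B(K₁ ∩ K₂) = B(K₁) ∩ B(K₂)` for nonempty compact `f`-invariant sets with nonempty
intersection. -/
theorem statBasin_inter {M : Type*} [MetricSpace M] [CompactSpace M]
    [MeasurableSpace M] [BorelSpace M] (f : M → M) (hf : Measurable f)
    (K₁ K₂ : Set M) (h₁ne : K₁.Nonempty) (h₂ne : K₂.Nonempty)
    (h₁c : IsCompact K₁) (h₂c : IsCompact K₂)
    (h₁inv : f ⁻¹' K₁ = K₁) (h₂inv : f ⁻¹' K₂ = K₂) (hne : (K₁ ∩ K₂).Nonempty) :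
    statBasin f (K₁ ∩ K₂) = statBasin f K₁ ∩ statBasin f K₂ :=
  statBasin_inter_general f K₁ K₂ h₁c h₂c hne
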